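/- Let L be a Lie conformal superalgebra and let Ψ be a homogeneous linear super-commuting map on L of parity |Ψ|, i.e., a conformal linear map Ψ_λ : L → ℂ[λ] ⊗ L shifting the ℤ/2-grading by |Ψ| and satisfying [Ψ_λ(u)_{λ+μ} u] = 0 for all u ∈ L. Then for all homogeneous u, v ∈ L, [Ψ_λ(u)_{λ+μ} v] = (−1)^{|u|(|Ψ|+|v|)}[u_{−∂−λ−μ} Ψ_λ(v)]. -/

import Mathlib

open scoped TensorProduct

noncomputable section

/-- The sign `(−1)^i` for a parity `i : ZMod 2`. -/
def sg (i : ZMod 2) : ℂ := if i = 0 then 1 else -1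

/-- A finitely supported family `f : ℕ →₀ L` encodes the polynomial `∑ₙ λ^n • (f n)`
in `ℂ[λ] ⊗ L`; this evaluates it at `lam : ℂ`. -/
def evalPoly {L : Type*} [AddCommGroup L] [Module ℂ L] (lam : ℂ) (f : ℕ →₀ L) : L :=
  f.sum fun n c => lam ^ n • c

/-- Evaluation of the polynomial encoded by `f : ℕ →₀ L` at an operator `T`
(used to substitute expressions like `−λ−∂` for the formal variable). -/
def evalPolyOp {L : Type*} [AddCommGroup L] [Module ℂ L] (T : Module.End ℂ L)
    (f : ℕ →₀ L) : L :=
  f.sum fun n c => (T ^ n) c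

/-- A Lie conformal superalgebra: a `ℤ/2`-graded `ℂ[∂]`-module with a λ-bracket
`[x_λ y] = ∑ₙ λ^n • (coeff x y n)` satisfying conformal sesquilinearity, skew-symmetry
and the graded Jacobi identity. -/
structure LieConformalSuperAlgebra (L : Type*) [AddCommGroup L] [Module ℂ L] where
  /-- the operator `∂` -/
  D : L →ₗ[ℂ] L
  /-- the `ℤ/2`-grading `L = L₀ ⊕ L₁` -/
  grading : ZMod 2 → Submodule ℂ L
  isInternal : DirectSum.IsInternal grading
  D_mem : ∀ (i : ZMod 2) (x : L), x ∈ grading i → D x ∈ grading i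
  /-- coefficients of the λ-bracket: `[x_λ y] = ∑ₙ λ^n • coeff x y n` -/
  coeff : L →ₗ[ℂ] L →ₗ[ℂ] (ℕ →₀ L)
  coeff_mem : ∀ (i j : ZMod 2) (x y : L), x ∈ grading i → y ∈ grading j →
    ∀ n, coeff x y n ∈ grading (i + j)
  /-- `[∂x_λ y] = −λ [x_λ y]` -/
  sesq₁ : ∀ (lam : ℂ) (x y : L),
    evalPoly lam (coeff (D x) y) = (-lam) • evalPoly lam (coeff x y)
  /-- `[x_λ ∂y] = (∂+λ) [x_λ y]` -/
  sesq₂ : ∀ (lam : ℂ) (x y : L),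
    evalPoly lam (coeff x (D y)) = D (evalPoly lam (coeff x y)) + lam • evalPoly lam (coeff x y)
  /-- `[x_λ y] = −(−1)^{|x||y|} [y_{−λ−∂} x]` -/
  skew : ∀ (i j : ZMod 2) (x y : L), x ∈ grading i → y ∈ grading j → ∀ lam : ℂ,
    evalPoly lam (coeff x y)
      = -(sg (i * j)) • evalPolyOp ((-lam) • (1 : Module.End ℂ L) - D) (coeff y x)
  /-- `[x_λ [y_μ z]] = [[x_λ y]_{λ+μ} z] + (−1)^{|x||y|} [y_μ [x_λ z]]` -/
  jacobi : ∀ (i j : ZMod 2) (x y z : L), x ∈ grading i → y ∈ grading j → ∀ lam mu : ℂ,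
    evalPoly lam (coeff x (evalPoly mu (coeff y z)))
      = evalPoly (lam + mu) (coeff (evalPoly lam (coeff x y)) z)
        + sg (i * j) • evalPoly mu (coeff y (evalPoly lam (coeff x z)))

namespace LieConformalSuperAlgebra

variable {L : Type*} [AddCommGroup L] [Module ℂ L]

/-- The λ-bracket `[x_λ y]`, evaluated at `lam : ℂ`. -/
def brk (S : LieConformalSuperAlgebra L) (lam : ℂ) (x y : L) : L :=
  evalPoly lam (S.coeff x y)

/-- The λ-bracket with an operator (e.g. `−λ−μ−∂`) substituted for the formal variable. -/
def brkOp (S : LieConformalSuperAlgebra L) (T : Module.End ℂ L) (x y : L) : L :=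
  evalPolyOp T (S.coeff x y)

/-- The center `Z(L) = {x : [x_λ y] = 0 for all λ, y}`. -/
def center (S : LieConformalSuperAlgebra L) : Set L :=
  {x : L | ∀ (lam : ℂ) (y : L), S.brk lam x y = 0}

/-- `L` is perfect: it is spanned, as a `ℂ[∂]`-module, by the coefficients of all
brackets `[x_λ y]`. -/
def IsPerfect (S : LieConformalSuperAlgebra L) : Prop :=
  Submodule.span ℂ
    {z : L | ∃ (x y : L) (n k : ℕ), z = ((S.D : Module.End ℂ L) ^ k) (S.coeff x y n)} = ⊤

end LieConformalSuperAlgebra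

/-- A conformal super-biderivation `φ_λ(x,y) = ∑ₙ λ^n • coeff x y n` of parity `parity`:
a conformal bilinear map, compatible with the grading shifted by `parity`, which is
skew-symmetric and a conformal derivation in its second argument. -/
structure SuperBiderivation {L : Type*} [AddCommGroup L] [Module ℂ L]
    (S : LieConformalSuperAlgebra L) where
  coeff : L →ₗ[ℂ] L →ₗ[ℂ] (ℕ →₀ L)
  parity : ZMod 2
  mem : ∀ (i j : ZMod 2) (x y : L), x ∈ S.grading i → y ∈ S.grading j →
    ∀ n, coeff x y n ∈ S.grading (i + j + parity)
  /-- `φ_λ(∂x, y) = −λ φ_λ(x, y)` -/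
  conf₁ : ∀ (lam : ℂ) (x y : L),
    evalPoly lam (coeff (S.D x) y) = (-lam) • evalPoly lam (coeff x y)
  /-- `φ_λ(x, ∂y) = (∂+λ) φ_λ(x, y)` -/
  conf₂ : ∀ (lam : ℂ) (x y : L),
    evalPoly lam (coeff x (S.D y))
      = S.D (evalPoly lam (coeff x y)) + lam • evalPoly lam (coeff x y)
  /-- `φ_λ(x,y) = −(−1)^{|x||y|} φ_{−∂−λ}(y,x)` -/
  skew : ∀ (i j : ZMod 2) (x y : L), x ∈ S.grading i → y ∈ S.grading j → ∀ lam : ℂ,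
    evalPoly lam (coeff x y)
      = -(sg (i * j)) • evalPolyOp ((-lam) • (1 : Module.End ℂ L) - S.D) (coeff y x)
  /-- `φ_λ(x,[y_μ z]) = [φ_λ(x,y)_{λ+μ} z] + (−1)^{|x||y|} [y_μ φ_λ(x,z)]` -/
  deriv : ∀ (i j : ZMod 2) (x y z : L), x ∈ S.grading i → y ∈ S.grading j → ∀ lam mu : ℂ,
    evalPoly lam (coeff x (S.brk mu y z))
      = S.brk (lam + mu) (evalPoly lam (coeff x y)) z
        + sg (i * j) • S.brk mu y (evalPoly lam (coeff x z))

/-- `φ_λ(x, y)` evaluated at `lam : ℂ`. -/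
def SuperBiderivation.app {L : Type*} [AddCommGroup L] [Module ℂ L]
    {S : LieConformalSuperAlgebra L} (φ : SuperBiderivation S) (lam : ℂ) (x y : L) : L :=
  evalPoly lam (φ.coeff x y)

/-- An element of the centroid `Cent(L)`: a homogeneous conformal linear map
`α_λ : L → ℂ[λ] ⊗ L` of parity `parity` with `α_λ([x_μ y]) = (−1)^{|x||α|} [x_μ α_λ(y)]`. -/
structure CentroidElem {L : Type*} [AddCommGroup L] [Module ℂ L]
    (S : LieConformalSuperAlgebra L) where
  coeff : L →ₗ[ℂ] (ℕ →₀ L)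
  parity : ZMod 2
  mem : ∀ (i : ZMod 2) (x : L), x ∈ S.grading i → ∀ n, coeff x n ∈ S.grading (i + parity)
  /-- conformal linearity: `α_λ(∂x) = (∂+λ) α_λ(x)` -/
  conf : ∀ (lam : ℂ) (x : L),
    evalPoly lam (coeff (S.D x)) = S.D (evalPoly lam (coeff x)) + lam • evalPoly lam (coeff x)
  /-- `α_λ([x_μ y]) = (−1)^{|x||α|} [x_μ α_λ(y)]` -/
  central : ∀ (i : ZMod 2) (x y : L), x ∈ S.grading i → ∀ lam mu : ℂ,
    evalPoly lam (coeff (S.brk mu x y)) = sg (i * parity) • S.brk mu x (evalPoly lam (coeff y))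

/-- `α_λ(x)` evaluated at `lam : ℂ`. -/
def CentroidElem.app {L : Type*} [AddCommGroup L] [Module ℂ L]
    {S : LieConformalSuperAlgebra L} (α : CentroidElem S) (lam : ℂ) (x : L) : L :=
  evalPoly lam (α.coeff x)

/-- A homogeneous linear super-commuting map: a conformal linear map `Ψ_λ` of parity
`parity`, shifting the grading by `parity`, with `[Ψ_λ(u)_{λ+μ} u] = 0` for all `u`. -/
structure SuperCommutingMap {L : Type*} [AddCommGroup L] [Module ℂ L]
    (S : LieConformalSuperAlgebra L) where
  coeff : L →ₗ[ℂ] (ℕ →₀ L)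
  parity : ZMod 2
  mem : ∀ (i : ZMod 2) (x : L), x ∈ S.grading i → ∀ n, coeff x n ∈ S.grading (i + parity)
  /-- conformal linearity: `Ψ_λ(∂x) = (∂+λ) Ψ_λ(x)` -/
  conf : ∀ (lam : ℂ) (x : L),
    evalPoly lam (coeff (S.D x)) = S.D (evalPoly lam (coeff x)) + lam • evalPoly lam (coeff x)
  /-- `[Ψ_λ(u)_{λ+μ} u] = 0` -/
  commuting : ∀ (lam mu : ℂ) (u : L), S.brk (lam + mu) (evalPoly lam (coeff u)) u = 0

/-- `Ψ_λ(x)` evaluated at `lam : ℂ`. -/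
def SuperCommutingMap.app {L : Type*} [AddCommGroup L] [Module ℂ L]
    {S : LieConformalSuperAlgebra L} (Ψ : SuperCommutingMap S) (lam : ℂ) (x : L) : L :=
  evalPoly lam (Ψ.coeff x)

/-- The `t`-th component map `L ⊗ A → L` relative to a basis `B` of `A`:
if `w = ∑ₜ wₜ ⊗ bₜ` then `tensorComponent B t w = wₜ`. -/
def tensorComponent {L : Type*} [AddCommGroup L] [Module ℂ L]
    {A : Type*} [CommRing A] [Algebra ℂ A] {ι : Type*} (B : Module.Basis ι ℂ A) (t : ι) :
    L ⊗[ℂ] A →ₗ[ℂ] L :=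
  (TensorProduct.rid ℂ L).toLinearMap ∘ₗ
    TensorProduct.map (LinearMap.id : L →ₗ[ℂ] L) (B.coord t)

/-! Polarizing `[Ψ_λ(u)_{λ+μ} u] = 0` at `u + v` gives `[Ψ_λ(u)_{λ+μ} v] = −[Ψ_λ(v)_{λ+μ} u]`;
then skew-symmetry of the λ-bracket, applied to `Ψ_λ(v)`, which has parity `|v| + |Ψ|`,
produces the sign. -/

section

variable {L : Type*} [AddCommGroup L] [Module ℂ L]

lemma evalPoly_add (lam : ℂ) (f g : ℕ →₀ L) :
    evalPoly lam (f + g) = evalPoly lam f + evalPoly lam g :=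
  Finsupp.sum_add_index' (fun _ => smul_zero _) (fun _ => smul_add _)

lemma evalPoly_mem (lam : ℂ) {f : ℕ →₀ L} {N : Submodule ℂ L} (h : ∀ n, f n ∈ N) :
    evalPoly lam f ∈ N :=
  Submodule.sum_mem N fun n _ => Submodule.smul_mem N _ (h n)

namespace LieConformalSuperAlgebra

variable (S : LieConformalSuperAlgebra L)

lemma brk_add_left (lam : ℂ) (x y z : L) :
    S.brk lam (x + y) z = S.brk lam x z + S.brk lam y z := by
  rw [brk, map_add, LinearMap.add_apply, evalPoly_add]; rfl

lemma brk_add_right (lam : ℂ) (x y z : L) :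
    S.brk lam x (y + z) = S.brk lam x y + S.brk lam x z := by
  rw [brk, map_add, evalPoly_add]; rfl

lemma brk_eq_neg_sg_smul_brkOp {i j : ZMod 2} {x y : L} (hx : x ∈ S.grading i)
    (hy : y ∈ S.grading j) (lam : ℂ) :
    S.brk lam x y = -sg (i * j) • S.brkOp ((-lam) • (1 : Module.End ℂ L) - S.D) y x :=
  S.skew i j x y hx hy lam

end LieConformalSuperAlgebra

namespace SuperCommutingMap

variable {S : LieConformalSuperAlgebra L} (Ψ : SuperCommutingMap S)

lemma app_add (lam : ℂ) (u v : L) : Ψ.app lam (u + v) = Ψ.app lam u + Ψ.app lam v := by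
  rw [app, map_add, evalPoly_add]; rfl

lemma app_mem (lam : ℂ) {i : ZMod 2} {u : L} (hu : u ∈ S.grading i) :
    Ψ.app lam u ∈ S.grading (i + Ψ.parity) :=
  evalPoly_mem lam (Ψ.mem i u hu)

lemma brk_app_self (lam mu : ℂ) (u : L) : S.brk (lam + mu) (Ψ.app lam u) u = 0 :=
  Ψ.commuting lam mu u

lemma brk_app_eq_neg (lam mu : ℂ) (u v : L) :
    S.brk (lam + mu) (Ψ.app lam u) v = -S.brk (lam + mu) (Ψ.app lam v) u := by
  have h := Ψ.brk_app_self lam mu (u + v)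
  rw [app_add, S.brk_add_left, S.brk_add_right, S.brk_add_right, brk_app_self, brk_app_self,
    zero_add, add_zero] at h
  exact eq_neg_of_add_eq_zero_left h

end SuperCommutingMap

end

/-- For a homogeneous linear super-commuting map `Ψ` on a Lie
conformal superalgebra `L` and homogeneous `u, v`:
`[Ψ_λ(u)_{λ+μ} v] = (−1)^{|u|(|Ψ|+|v|)} [u_{−∂−λ−μ} Ψ_λ(v)]`. -/
theorem commutingMap_skew {L : Type*} [AddCommGroup L] [Module ℂ L]
    (S : LieConformalSuperAlgebra L) (Ψ : SuperCommutingMap S)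
    (i j : ZMod 2) (u v : L) (hu : u ∈ S.grading i) (hv : v ∈ S.grading j)
    (lam mu : ℂ) :
    S.brk (lam + mu) (Ψ.app lam u) v
      = sg (i * (Ψ.parity + j)) •
          S.brkOp ((-(lam + mu)) • (1 : Module.End ℂ L) - S.D) u (Ψ.app lam v) := by
  have hsg : (j + Ψ.parity) * i = i * (Ψ.parity + j) := by ring
  rw [Ψ.brk_app_eq_neg, S.brk_eq_neg_sg_smul_brkOp (Ψ.app_mem lam hv) hu, hsg, neg_smul, neg_neg]
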